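/- arXiv:2312.16505 — 2 statements merged into one kernel-verified Lean document; each statement's English description precedes it below -/
import Mathlib

section
/- Let A be a complex n×n H-matrix, and let M and F be complex n×n matrices satisfying ⟨M⟩ - |M - A| = ⟨A⟩ and ⟨F⟩ - |F - A| = ⟨A⟩ (so that M and F are invertible). Let E_1, …, E_m be diagonal n×n matrices whose diagonal entries are each 0 or 1 and which satisfy Σ_{s=1}^m E_s = I, and for each s ∈ {1,…,m} define P_s := (I - F⁻¹A) E_s (I - M⁻¹A). Then ρ(Σ_{s=1}^m |P_s|) < 1. -/
/-!
Since `⟨A⟩` is an M-matrix, some vector `u > 0` has `⟨A⟩ u > 0`: with `B = α I - ⟨A⟩`, Gelfand's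
formula gives `B^k 1 < α^k 1` for some `k ≥ 1`, and a truncated Neumann series of `(α I - B)⁻¹`
does the job. As `⟨M⟩ = ⟨A⟩ + |M - A|`, the matrix `M` is diagonally dominant with respect to the
weights `u`, and a maximum principle (look at the index maximising `|x_j| / u_j`) yields
`|I - M⁻¹ A| u ≤ θ_M u` with `θ_M = max_i (|M - A| u)_i / (⟨M⟩ u)_i < 1`; likewise for `F`.
The `E_s` are complementary coordinate projections, so `∑ₛ |P_s| ≤ |I - F⁻¹ A| |I - M⁻¹ A|`,
hence `(∑ₛ |P_s|) u ≤ θ_F θ_M u`, and a nonnegative matrix admitting such a positive vector has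
spectral radius at most `θ_F θ_M < 1`.
-/

open Matrix

/-- Spectral radius of a real square matrix: the supremum of the moduli of its
complex eigenvalues. -/
noncomputable def specRad {m : Type*} [Fintype m] [DecidableEq m]
    (A : Matrix m m ℝ) : ℝ :=
  sSup ((fun z : ℂ => ‖z‖) '' spectrum ℂ (A.map Complex.ofReal))

/-- Entrywise absolute value (modulus) of a complex matrix. -/
noncomputable def cabs {m l : Type*} (A : Matrix m l ℂ) : Matrix m l ℝ :=
  fun i j => ‖A i j‖

/-- Comparison matrix of a complex square matrix. -/
noncomputable def compMat {m : Type*} [DecidableEq m]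
    (A : Matrix m m ℂ) : Matrix m m ℝ :=
  fun i j => if i = j then ‖A i j‖ else -‖A i j‖

/-- M-matrix: there is `α` with `α I - A ≥ 0` entrywise and `α > ρ(α I - A)`. -/
def IsMMat {m : Type*} [Fintype m] [DecidableEq m]
    (A : Matrix m m ℝ) : Prop :=
  ∃ α : ℝ, (∀ i j, 0 ≤ (α • (1 : Matrix m m ℝ) - A) i j) ∧
    specRad (α • (1 : Matrix m m ℝ) - A) < α

/-- H-matrix: a complex square matrix whose comparison matrix is an M-matrix. -/
def IsHMat {m : Type*} [Fintype m] [DecidableEq m]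
    (A : Matrix m m ℂ) : Prop :=
  IsMMat (compMat A)

open Filter
open scoped NNReal

lemma sum_cabs_eq_one {ι : Type*} [DecidableEq ι] {σ : Type*} [Fintype σ] {E : σ → Matrix ι ι ℂ}
    (hdiag : ∀ s i j, i ≠ j → E s i j = 0) (h01 : ∀ s i, E s i i = 0 ∨ E s i i = 1)
    (hsum : ∑ s, E s = 1) : ∑ s, cabs (E s) = 1 := by
  ext i j
  rw [Matrix.sum_apply]
  by_cases hij : i = j
  · subst hij
    have hre : ∀ s, cabs (E s) i i = (E s i i).re := fun s => by
      rcases h01 s i with h | h <;> simp [cabs, h]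
    simp_rw [hre, ← Complex.re_sum, ← Matrix.sum_apply, hsum, one_apply_eq, Complex.one_re]
  · simp [cabs, hdiag _ _ _ hij, one_apply_ne hij]

variable {ι : Type*} [Fintype ι]

lemma exists_nonneg_lt_forall_le {f : ι → ℝ} {c : ℝ} (hc : 0 < c) (hf : ∀ i, f i < c) :
    ∃ θ, 0 ≤ θ ∧ θ < c ∧ ∀ i, f i ≤ θ := by
  obtain ⟨o, ho⟩ := Finite.exists_max fun o : Option ι => o.elim 0 f
  refine ⟨o.elim 0 f, ho none, ?_, fun i => ho (some i)⟩
  cases o with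
  | none => exact hc
  | some i => exact hf i

lemma exists_forall_le_mul_eq_mul [Nonempty ι] (x : ι → ℝ) {u : ι → ℝ} (hu : ∀ i, 0 < u i) :
    ∃ k t, (∀ j, x j ≤ t * u j) ∧ x k = t * u k := by
  obtain ⟨k, hk⟩ := Finite.exists_max fun j => x j / u j
  exact ⟨k, x k / u k, fun j => (div_le_iff₀ (hu j)).1 (hk j), by field_simp [(hu k).ne']⟩

lemma norm_mulVec_le_mulVec {m : Type*} {B : Matrix m ι ℂ} {S : Matrix m ι ℝ}
    (hBS : ∀ i j, ‖B i j‖ ≤ S i j) {v : ι → ℂ} {w : ι → ℝ} (hvw : ∀ j, ‖v j‖ ≤ w j) (i : m) :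
    ‖(B *ᵥ v) i‖ ≤ (S *ᵥ w) i :=
  calc ‖(B *ᵥ v) i‖ ≤ ∑ j, ‖B i j‖ * ‖v j‖ := by
        simpa only [mulVec, dotProduct, norm_mul] using
          norm_sum_le Finset.univ fun j => B i j * v j
    _ ≤ (S *ᵥ w) i := Finset.sum_le_sum fun j _ =>
        mul_le_mul (hBS i j) (hvw j) (norm_nonneg _) ((norm_nonneg _).trans (hBS i j))

lemma mulVec_le_mulVec {m : Type*} {S T : Matrix m ι ℝ} (hST : ∀ i j, S i j ≤ T i j)
    (hS : ∀ i j, 0 ≤ S i j) {v w : ι → ℝ} (hvw : ∀ j, v j ≤ w j) (hw : ∀ j, 0 ≤ w j) (i : m) :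
    (S *ᵥ v) i ≤ (T *ᵥ w) i :=
  Finset.sum_le_sum fun j _ => mul_le_mul_of_nonneg (hST i j) (hvw j) (hS i j) (hw j)

lemma cabs_mul_le {l m : Type*} (X : Matrix l ι ℂ) (Y : Matrix ι m ℂ) (i : l) (j : m) :
    cabs (X * Y) i j ≤ (cabs X * cabs Y) i j :=
  (norm_sum_le Finset.univ fun k => X i k * Y k j).trans_eq (by simp only [norm_mul]; rfl)

lemma cabs_mul_mul_le {l m : Type*} (X : Matrix l ι ℂ) (E : Matrix ι ι ℂ) (Y : Matrix ι m ℂ)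
    (i : l) (j : m) : cabs (X * E * Y) i j ≤ (cabs X * cabs E * cabs Y) i j :=
  (cabs_mul_le _ _ i j).trans <| Finset.sum_le_sum fun k _ =>
    mul_le_mul_of_nonneg_right (cabs_mul_le X E i k) (norm_nonneg _)

lemma sum_cabs_mul_mul_le {σ : Type*} [Fintype σ] [DecidableEq ι] (X Y : Matrix ι ι ℂ)
    {E : σ → Matrix ι ι ℂ} (hE : ∑ s, cabs (E s) = 1) (i j : ι) :
    (∑ s, cabs (X * E s * Y)) i j ≤ (cabs X * cabs Y) i j :=
  calc (∑ s, cabs (X * E s * Y)) i j ≤ ∑ s, (cabs X * cabs (E s) * cabs Y) i j := by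
        rw [Matrix.sum_apply]
        exact Finset.sum_le_sum fun s _ => cabs_mul_mul_le _ _ _ i j
    _ = (cabs X * cabs Y) i j := by
        rw [← Matrix.sum_apply, ← Finset.sum_mul, ← Finset.mul_sum, hE, Matrix.mul_one]

lemma mul_mulVec_le {S T : Matrix ι ι ℝ} (hS : ∀ i j, 0 ≤ S i j) {u : ι → ℝ}
    (hu : ∀ j, 0 ≤ u j) {a b : ℝ} (hb : 0 ≤ b) (hSu : ∀ i, (S *ᵥ u) i ≤ a * u i)
    (hTu : ∀ i, (T *ᵥ u) i ≤ b * u i) (i : ι) : ((S * T) *ᵥ u) i ≤ a * b * u i :=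
  calc ((S * T) *ᵥ u) i ≤ (S *ᵥ (b • u)) i := by
        rw [← mulVec_mulVec]
        exact mulVec_le_mulVec (fun _ _ => le_rfl) hS hTu (fun j => mul_nonneg hb (hu j)) i
    _ = b * (S *ᵥ u) i := by rw [mulVec_smul, Pi.smul_apply, smul_eq_mul]
    _ ≤ b * (a * u i) := mul_le_mul_of_nonneg_left (hSu i) hb
    _ = a * b * u i := by ring

lemma cabs_mulVec_le_of_forall_norm_mulVec_le {m : Type*} {X : Matrix m ι ℂ} {u : ι → ℝ}
    (hu : ∀ j, 0 ≤ u j) {c : ℝ} {i : m}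
    (h : ∀ y : ι → ℂ, (∀ j, ‖y j‖ ≤ u j) → ‖(X *ᵥ y) i‖ ≤ c) : (cabs X *ᵥ u) i ≤ c := by
  -- test `X` against the vector aligning the phases of its `i`-th row
  set y : ι → ℂ := fun j => (‖X i j‖ : ℂ) / X i j * u j
  have hy : ∀ j, ‖y j‖ ≤ u j := fun j => by
    simpa [y, norm_mul, abs_of_nonneg (hu j)] using
      mul_le_of_le_one_left (hu j) (div_self_le_one ‖X i j‖)
  have hXy : (X *ᵥ y) i = ((cabs X *ᵥ u) i : ℂ) := by
    simp only [mulVec, dotProduct, Complex.ofReal_sum, Complex.ofReal_mul, cabs, y]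
    refine Finset.sum_congr rfl fun j _ => ?_
    rcases eq_or_ne (X i j) 0 with h0 | h0
    · simp [h0]
    · field_simp
  calc (cabs X *ᵥ u) i ≤ ‖(X *ᵥ y) i‖ := by rw [hXy, Complex.norm_real]; exact le_abs_self _
    _ ≤ c := h y hy

lemma exists_norm_pow_lt_of_spectralRadius_lt {A : Type*} [NormedRing A] [NormedAlgebra ℂ A]
    [CompleteSpace A] (a : A) {α : ℝ} (ha : spectralRadius ℂ a < ENNReal.ofReal α) :
    ∃ k, 0 < k ∧ ‖a ^ k‖ < α ^ k := by
  have hα : 0 < α := ENNReal.ofReal_pos.1 (pos_of_gt ha)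
  obtain ⟨k, hk, hlt⟩ := ((eventually_gt_atTop 0).and
    ((spectrum.pow_nnnorm_pow_one_div_tendsto_nhds_spectralRadius a).eventually_lt_const ha)).exists
  have hkR : (0 : ℝ) < k := Nat.cast_pos.2 hk
  refine ⟨k, hk, ?_⟩
  have h := ENNReal.rpow_lt_rpow hlt hkR
  rw [← ENNReal.rpow_mul, one_div, inv_mul_cancel₀ hkR.ne', ENNReal.rpow_one,
    ENNReal.rpow_natCast, ← ENNReal.ofReal_pow hα.le] at h
  rw [← coe_nnnorm, ← ENNReal.toReal_ofReal (pow_nonneg hα.le k)]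
  exact ENNReal.toReal_strict_mono ENNReal.ofReal_ne_top h

section

variable [DecidableEq ι]

lemma compMat_mulVec_apply (M : Matrix ι ι ℂ) (u : ι → ℝ) (k : ι) :
    (compMat M *ᵥ u) k = ‖M k k‖ * u k - ∑ j ∈ Finset.univ.erase k, ‖M k j‖ * u j := by
  rw [mulVec, dotProduct, ← Finset.add_sum_erase _ _ (Finset.mem_univ k), sub_eq_add_neg,
    ← Finset.sum_neg_distrib]
  refine congrArg₂ (· + ·) (by simp [compMat]) (Finset.sum_congr rfl fun j hj => ?_)
  simp [compMat, Ne.symm (Finset.ne_of_mem_erase hj)]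

lemma mul_compMat_mulVec_le_norm_mulVec (M : Matrix ι ι ℂ) {u : ι → ℝ} {x : ι → ℂ} {t : ℝ}
    {k : ι} (hle : ∀ j, ‖x j‖ ≤ t * u j) (heq : ‖x k‖ = t * u k) :
    t * (compMat M *ᵥ u) k ≤ ‖(M *ᵥ x) k‖ := by
  set off := ∑ j ∈ Finset.univ.erase k, M k j * x j
  have hsplit : M k k * x k = (M *ᵥ x) k - off :=
    eq_sub_of_add_eq (Finset.add_sum_erase _ (fun j => M k j * x j) (Finset.mem_univ k))
  have hoff : ‖off‖ ≤ t * ∑ j ∈ Finset.univ.erase k, ‖M k j‖ * u j := by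
    rw [Finset.mul_sum]
    refine (norm_sum_le _ _).trans (Finset.sum_le_sum fun j _ => ?_)
    rw [norm_mul, mul_left_comm]
    exact mul_le_mul_of_nonneg_left (hle j) (norm_nonneg _)
  have hdiag : ‖M k k‖ * (t * u k) ≤ ‖(M *ᵥ x) k‖ + ‖off‖ := by
    rw [← heq, ← norm_mul, hsplit]
    exact norm_sub_le _ _
  rw [compMat_mulVec_apply]
  linarith

lemma norm_le_of_norm_mulVec_le {M : Matrix ι ι ℂ} {u : ι → ℝ} (hu : ∀ i, 0 < u i)
    (hMu : ∀ i, 0 < (compMat M *ᵥ u) i) {θ : ℝ} {x : ι → ℂ}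
    (hx : ∀ i, ‖(M *ᵥ x) i‖ ≤ θ * (compMat M *ᵥ u) i) (i : ι) : ‖x i‖ ≤ θ * u i := by
  have : Nonempty ι := ⟨i⟩
  obtain ⟨k, t, hle, heq⟩ := exists_forall_le_mul_eq_mul (fun j => ‖x j‖) hu
  have htθ : t ≤ θ :=
    le_of_mul_le_mul_right ((mul_compMat_mulVec_le_norm_mulVec M hle heq).trans (hx k)) (hMu k)
  exact (hle i).trans (mul_le_mul_of_nonneg_right htθ (hu i).le)

lemma isUnit_det_of_compMat_mulVec_pos {M : Matrix ι ι ℂ} {u : ι → ℝ} (hu : ∀ i, 0 < u i)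
    (hMu : ∀ i, 0 < (compMat M *ᵥ u) i) : IsUnit M.det := by
  rw [isUnit_iff_ne_zero, Ne, ← exists_mulVec_eq_zero_iff]
  rintro ⟨v, hv0, hv⟩
  refine hv0 (funext fun i => norm_le_zero_iff.1 ?_)
  simpa using norm_le_of_norm_mulVec_le hu hMu (θ := 0) (by simp [hv]) i

lemma exists_cabs_one_sub_inv_mul_mulVec_le {A M : Matrix ι ι ℂ}
    (hM : compMat M - cabs (M - A) = compMat A) {u : ι → ℝ} (hu : ∀ i, 0 < u i)
    (hAu : ∀ i, 0 < (compMat A *ᵥ u) i) :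
    ∃ θ, 0 ≤ θ ∧ θ < 1 ∧ ∀ i, (cabs (1 - M⁻¹ * A) *ᵥ u) i ≤ θ * u i := by
  have hNu : ∀ i, 0 ≤ (cabs (M - A) *ᵥ u) i := fun i =>
    Finset.sum_nonneg fun j _ => mul_nonneg (norm_nonneg _) (hu j).le
  have hMu_eq : ∀ i, (compMat M *ᵥ u) i = (compMat A *ᵥ u) i + (cabs (M - A) *ᵥ u) i := by
    intro i
    rw [← Pi.add_apply, ← add_mulVec, ← hM, sub_add_cancel]
  have hMu : ∀ i, 0 < (compMat M *ᵥ u) i := fun i => by linarith [hMu_eq i, hAu i, hNu i]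
  obtain ⟨θ, hθ0, hθ1, hθ⟩ := exists_nonneg_lt_forall_le one_pos fun i =>
    (div_lt_one (hMu i)).2 (by linarith [hMu_eq i, hAu i] :
      (cabs (M - A) *ᵥ u) i < (compMat M *ᵥ u) i)
  have hdet := isUnit_det_of_compMat_mulVec_pos hu hMu
  have hsub : 1 - M⁻¹ * A = M⁻¹ * (M - A) := by rw [Matrix.mul_sub, nonsing_inv_mul _ hdet]
  refine ⟨θ, hθ0, hθ1, fun i => cabs_mulVec_le_of_forall_norm_mulVec_le (fun j => (hu j).le)
    fun y hy => norm_le_of_norm_mulVec_le hu hMu (fun k => ?_) i⟩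
  rw [hsub, mulVec_mulVec, ← Matrix.mul_assoc, mul_nonsing_inv _ hdet, Matrix.one_mul]
  exact (norm_mulVec_le_mulVec (fun _ _ => le_rfl) hy k).trans ((div_le_iff₀ (hMu k)).1 (hθ k))

lemma specRad_nonneg (B : Matrix ι ι ℝ) : 0 ≤ specRad B :=
  Real.sSup_nonneg <| by rintro _ ⟨z, -, rfl⟩; exact norm_nonneg z

lemma spectralRadius_map_ofReal_le (B : Matrix ι ι ℝ) :
    spectralRadius ℂ (B.map Complex.ofReal) ≤ ENNReal.ofReal (specRad B) := by
  have hbdd := ((B.map Complex.ofReal).finite_spectrum.image fun z : ℂ => ‖z‖).bddAbove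
  refine iSup₂_le fun z hz => ?_
  rw [← enorm_eq_nnnorm, ← ofReal_norm]
  exact ENNReal.ofReal_le_ofReal (le_csSup hbdd ⟨z, hz, rfl⟩)

lemma norm_le_of_mem_spectrum {B : Matrix ι ι ℂ} {S : Matrix ι ι ℝ}
    (hBS : ∀ i j, ‖B i j‖ ≤ S i j) {u : ι → ℝ} (hu : ∀ i, 0 < u i) {r : ℝ}
    (hSu : ∀ i, (S *ᵥ u) i ≤ r * u i) {z : ℂ} (hz : z ∈ spectrum ℂ B) : ‖z‖ ≤ r := by
  rw [← spectrum_toLin', ← Module.End.hasEigenvalue_iff_mem_spectrum] at hz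
  obtain ⟨v, hv, hv0⟩ := hz.exists_hasEigenvector
  rw [Module.End.mem_eigenspace_iff, toLin'_apply] at hv
  obtain ⟨i, hi⟩ := Function.ne_iff.1 hv0
  have : Nonempty ι := ⟨i⟩
  obtain ⟨k, t, hle, heq⟩ := exists_forall_le_mul_eq_mul (fun j => ‖v j‖) hu
  have hvk : 0 < ‖v k‖ := by
    have h0 : 0 < t * u i := (norm_pos_iff.2 hi).trans_le (hle i)
    rw [heq]
    exact mul_pos (pos_of_mul_pos_left h0 (hu i).le) (hu k)
  refine le_of_mul_le_mul_right ?_ hvk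
  calc ‖z‖ * ‖v k‖ = ‖(B *ᵥ v) k‖ := by rw [hv, Pi.smul_apply, smul_eq_mul, norm_mul]
    _ ≤ (S *ᵥ (t • u)) k := norm_mulVec_le_mulVec hBS (fun j => hle j) k
    _ = t * (S *ᵥ u) k := by rw [mulVec_smul, Pi.smul_apply, smul_eq_mul]
    _ ≤ t * (r * u k) := mul_le_mul_of_nonneg_left (hSu k) ?_
    _ = r * ‖v k‖ := by rw [heq]; ring
  exact nonneg_of_mul_nonneg_left (heq ▸ hvk.le) (hu k)

lemma specRad_le_of_mulVec_le {S : Matrix ι ι ℝ} (hS : ∀ i j, 0 ≤ S i j) {u : ι → ℝ}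
    (hu : ∀ i, 0 < u i) {r : ℝ} (hr : 0 ≤ r) (hSu : ∀ i, (S *ᵥ u) i ≤ r * u i) :
    specRad S ≤ r :=
  Real.sSup_le (by
    rintro _ ⟨z, hz, rfl⟩
    exact norm_le_of_mem_spectrum (fun i j => by simp [abs_of_nonneg (hS i j)]) hu hSu hz) hr

lemma exists_pow_mulVec_one_lt {B : Matrix ι ι ℝ} {α : ℝ} (hB : specRad B < α) :
    ∃ k, 0 < k ∧ ∀ i, (B ^ k *ᵥ fun _ => 1) i < α ^ k := by
  let : NormedRing (Matrix ι ι ℂ) := Matrix.linftyOpNormedRing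
  let : NormedAlgebra ℂ (Matrix ι ι ℂ) := Matrix.linftyOpNormedAlgebra
  have : CompleteSpace (Matrix ι ι ℂ) := FiniteDimensional.complete ℂ _
  have hα : 0 < α := (specRad_nonneg B).trans_lt hB
  obtain ⟨k, hk, hnorm⟩ := exists_norm_pow_lt_of_spectralRadius_lt (B.map Complex.ofReal)
    ((spectralRadius_map_ofReal_le B).trans_lt ((ENNReal.ofReal_lt_ofReal_iff hα).2 hB))
  refine ⟨k, hk, fun i => lt_of_le_of_lt ?_ hnorm⟩
  rw [show B.map Complex.ofReal ^ k = (B ^ k).map Complex.ofReal from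
    (Matrix.map_pow B Complex.ofRealHom k).symm, linfty_opNorm_def]
  calc (B ^ k *ᵥ fun _ => 1) i ≤ ∑ j, ‖(B ^ k) i j‖ := by
        simpa [mulVec, dotProduct] using Finset.sum_le_sum fun j _ => le_abs_self ((B ^ k) i j)
    _ = ((∑ j, ‖(B ^ k).map Complex.ofReal i j‖₊ : ℝ≥0) : ℝ) := by simp
    _ ≤ _ := NNReal.coe_le_coe.2 <|
        Finset.le_sup (f := fun i => ∑ j, ‖(B ^ k).map Complex.ofReal i j‖₊) (Finset.mem_univ i)

lemma exists_pos_smul_one_sub_mulVec_pos {B : Matrix ι ι ℝ} (hB : ∀ i j, 0 ≤ B i j) {α : ℝ}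
    (hα : 0 < α) {k : ℕ} (hk : 0 < k) (hBk : ∀ i, (B ^ k *ᵥ fun _ => 1) i < α ^ k) :
    ∃ u : ι → ℝ, (∀ i, 0 < u i) ∧ ∀ i, 0 < ((α • 1 - B) *ᵥ u) i := by
  -- `G = α ^ (k - 1) ∑_{j < k} (B / α) ^ j`, a truncated Neumann series of `α (α - B)⁻¹`
  set G := ∑ j ∈ Finset.range k, α ^ j • B ^ (k - 1 - j)
  have hG : (α • 1 - B) * G = α ^ k • 1 - B ^ k := by
    simpa [G, Algebra.algebraMap_eq_smul_one, smul_pow] using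
      (Algebra.commute_algebraMap_left α B).mul_geom_sum₂ k
  refine ⟨G *ᵥ fun _ => 1, fun i => ?_, fun i => ?_⟩
  · have hterm : ∀ j, 0 ≤ ((α ^ j • B ^ (k - 1 - j)) *ᵥ fun _ => 1) i := fun j =>
      Finset.sum_nonneg fun l _ =>
        mul_nonneg (smul_nonneg (pow_nonneg hα.le j) (pow_apply_nonneg hB _ i l)) zero_le_one
    rw [sum_mulVec, Finset.sum_apply]
    refine Finset.sum_pos' (fun j _ => hterm j) ⟨k - 1, Finset.mem_range.2 (by omega), ?_⟩
    simpa [smul_mulVec] using pow_pos hα (k - 1)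
  · rw [mulVec_mulVec, hG, sub_mulVec, Pi.sub_apply, smul_mulVec, one_mulVec]
    simpa using hBk i

lemma IsMMat.exists_pos_mulVec_pos {A : Matrix ι ι ℝ} (hA : IsMMat A) :
    ∃ u : ι → ℝ, (∀ i, 0 < u i) ∧ ∀ i, 0 < (A *ᵥ u) i := by
  obtain ⟨α, hB, hρ⟩ := hA
  obtain ⟨k, hk, hBk⟩ := exists_pow_mulVec_one_lt hρ
  simpa using exists_pos_smul_one_sub_mulVec_pos hB ((specRad_nonneg _).trans_lt hρ) hk hBk

end

theorem stmt7 {n m : ℕ} (A M F : Matrix (Fin n) (Fin n) ℂ)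
    (hA : IsHMat A)
    (hM : compMat M - cabs (M - A) = compMat A)
    (hF : compMat F - cabs (F - A) = compMat A)
    (E : Fin m → Matrix (Fin n) (Fin n) ℂ)
    (hEdiag : ∀ s i j, i ≠ j → E s i j = 0)
    (hE01 : ∀ s i, E s i i = 0 ∨ E s i i = 1)
    (hEsum : ∑ s, E s = 1)
    (P : Fin m → Matrix (Fin n) (Fin n) ℂ)
    (hP : ∀ s, P s = (1 - F⁻¹ * A) * E s * (1 - M⁻¹ * A)) :
    specRad (∑ s, cabs (P s)) < 1 := by
  obtain rfl : P = _ := funext hP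
  obtain ⟨u, hu, hAu⟩ := IsMMat.exists_pos_mulVec_pos hA
  obtain ⟨θM, hθM0, hθM1, hMu⟩ := exists_cabs_one_sub_inv_mul_mulVec_le hM hu hAu
  obtain ⟨θF, hθF0, hθF1, hFu⟩ := exists_cabs_one_sub_inv_mul_mulVec_le hF hu hAu
  have hB0 : ∀ i j, 0 ≤ (∑ s, cabs ((1 - F⁻¹ * A) * E s * (1 - M⁻¹ * A))) i j := fun i j => by
    rw [Matrix.sum_apply]
    exact Finset.sum_nonneg fun s _ => norm_nonneg _
  have hBu : ∀ i, ((∑ s, cabs ((1 - F⁻¹ * A) * E s * (1 - M⁻¹ * A))) *ᵥ u) i ≤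
      θF * θM * u i := fun i =>
    (mulVec_le_mulVec (sum_cabs_mul_mul_le _ _ (sum_cabs_eq_one hEdiag hE01 hEsum)) hB0
      (fun _ => le_rfl) (fun j => (hu j).le) i).trans
      (mul_mulVec_le (fun _ _ => norm_nonneg _) (fun j => (hu j).le) hθM0 hFu hMu i)
  exact (specRad_le_of_mulVec_le hB0 hu (mul_nonneg hθF0 hθM0) hBu).trans_lt
    (mul_lt_one_of_nonneg_of_lt_one_left hθF0 hθF1 hθM1.le)
end

section
/- Let A be a complex n×n H-matrix, and let M and F be complex n×n matrices satisfying ⟨M⟩ − |M − A| = ⟨A⟩ and ⟨F⟩ − |F − A| = ⟨A⟩. Then the 2n×2n block matrix Â = [[M, A − M], [A − F, F]] is an H-matrix. -/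
/-!
Write `Q = ⟨A⟩`, `R = |M - A|`, `S = |F - A|`. The hypotheses say `⟨M⟩ = Q + R` and
`⟨F⟩ = Q + S`, so `⟨Â⟩ = [[Q + R, -R], [-S, Q + S]]`, and for large `β` the matrix
`P = βI - ⟨Â⟩ = [[B - R, R], [S, B - S]]` with `B = βI - Q` is nonnegative. Conjugating by
`[[I, 0], [I, I]]` makes `P` block upper triangular with diagonal blocks `B` and `B - R - S`,
both dominated in modulus by `B`. If `Hv = μv` with `|H| ≤ βI - Q` entrywise, then
`Q|v| ≤ (β - |μ|)|v|`, and an M-matrix admits no nonzero `r ≥ 0` with `Qr ≤ 0`; hence every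
eigenvalue of `P` has modulus `< β`. That last fact comes from Gelfand's formula: with
`D = αI - Q ≥ 0`, `Dr ≥ αr` gives `‖Dᵏ‖ ≥ c αᵏ` for some `c > 0`, so `ρ(D) ≥ α`.
-/

open Matrix

open Filter Topology

namespace Matrix

section Algebra

variable {m n R : Type*} [Fintype m] [DecidableEq m] [Fintype n] [DecidableEq n]

theorem spectrum_fromBlocks_zero₂₁ [CommRing R] (A : Matrix m m R) (B : Matrix m n R)
    (D : Matrix n n R) : spectrum R (fromBlocks A B 0 D) = spectrum R A ∪ spectrum R D := by
  ext r
  simp only [Set.mem_union, mem_spectrum_iff_not_isUnit_eval_charpoly, charpoly_fromBlocks_zero₂₁,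
    Polynomial.eval_mul, IsUnit.mul_iff, not_and_or]

theorem spectrum_fromBlocks_sub_sub [CommRing R] (B C D : Matrix m m R) :
    spectrum R (fromBlocks (B - C) C D (B - D)) = spectrum R B ∪ spectrum R (B - C - D) := by
  let u : (Matrix (m ⊕ m) (m ⊕ m) R)ˣ :=
    ⟨fromBlocks 1 0 1 1, fromBlocks 1 0 (-1) 1, by simp [fromBlocks_multiply],
      by simp [fromBlocks_multiply]⟩
  have : fromBlocks (B - C) C D (B - D) = u * fromBlocks B C 0 (B - C - D) * u⁻¹ := by
    simp only [u, Units.inv_mk, Units.val_mk, fromBlocks_multiply]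
    congr 1 <;> simp <;> abel
  rw [this, spectrum.units_conjugate, spectrum_fromBlocks_zero₂₁]

theorem exists_mulVec_eq_smul_of_mem_spectrum [Field R] {A : Matrix m m R} {μ : R}
    (hμ : μ ∈ spectrum R A) : ∃ v ≠ 0, A *ᵥ v = μ • v := by
  rw [spectrum.mem_iff, Algebra.algebraMap_eq_smul_one, isUnit_iff_isUnit_det, isUnit_iff_ne_zero,
    not_not, ← exists_mulVec_eq_zero_iff] at hμ
  obtain ⟨v, hv, hμv⟩ := hμ
  refine ⟨v, hv, ?_⟩
  rwa [sub_mulVec, smul_mulVec, one_mulVec, sub_eq_zero, eq_comm] at hμv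

end Algebra

section Order

variable {m R : Type*} [Fintype m] [CommSemiring R] [PartialOrder R] [IsOrderedRing R]

theorem mulVec_mono {D : Matrix m m R} (hD : ∀ i j, 0 ≤ D i j) {u v : m → R} (h : u ≤ v) :
    D *ᵥ u ≤ D *ᵥ v := fun i =>
  Finset.sum_le_sum fun j _ => mul_le_mul_of_nonneg_left (h j) (hD i j)

theorem smul_pow_le_pow_mulVec [DecidableEq m] {D : Matrix m m R} (hD : ∀ i j, 0 ≤ D i j)
    {r : m → R} {c : R} (hc : 0 ≤ c) (h : c • r ≤ D *ᵥ r) (k : ℕ) :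
    c ^ k • r ≤ D ^ k *ᵥ r := by
  induction k with
  | zero => simp
  | succ k ih =>
    calc c ^ (k + 1) • r = c ^ k • (c • r) := by rw [pow_succ, mul_smul]
      _ ≤ c ^ k • (D *ᵥ r) := smul_le_smul_of_nonneg_left h (pow_nonneg hc k)
      _ = D *ᵥ (c ^ k • r) := (mulVec_smul D _ r).symm
      _ ≤ D *ᵥ (D ^ k *ᵥ r) := mulVec_mono hD ih
      _ = D ^ (k + 1) *ᵥ r := by rw [pow_succ', mulVec_mulVec]

end Order

theorem smul_one_sub_nonneg {m R : Type*} [DecidableEq m] [Ring R] [PartialOrder R]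
    [IsOrderedRing R] {X : Matrix m m R} {β : R} (hX : ∀ i j, i ≠ j → X i j ≤ 0)
    (hβ : ∀ i, X i i ≤ β) (i j : m) : 0 ≤ (β • 1 - X) i j := by
  by_cases hij : i = j
  · subst hij
    simpa using hβ i
  · simpa [hij] using hX i j hij

section Gelfand

variable {m : Type*} [Fintype m] [DecidableEq m]

attribute [local instance] Matrix.linftyOpNormedRing Matrix.linftyOpNormedAlgebra

theorem linfty_opNorm_map_ofReal (D : Matrix m m ℝ) : ‖D.map ((↑) : ℝ → ℂ)‖ = ‖D‖ := by
  simp [linfty_opNorm_def, Complex.nnnorm_real]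

theorem ofReal_le_spectralRadius_of_smul_le_mulVec {D : Matrix m m ℝ} (hD : ∀ i j, 0 ≤ D i j)
    {r : m → ℝ} {i₀ : m} (hi₀ : 0 < r i₀) {c : ℝ} (hc : 0 ≤ c) (h : c • r ≤ D *ᵥ r) :
    ENNReal.ofReal c ≤ spectralRadius ℂ (D.map ((↑) : ℝ → ℂ)) := by
  have hr : 0 < ‖r‖ := hi₀.trans_le ((Real.le_norm_self _).trans (norm_le_pi_norm r i₀))
  set t := r i₀ / ‖r‖
  have ht : 0 < t := div_pos hi₀ hr
  have hpow : ∀ k : ℕ, c ^ k * t ≤ ‖D ^ k‖ := fun k => by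
    rw [← mul_div_assoc, div_le_iff₀ hr]
    calc c ^ k * r i₀ ≤ (D ^ k *ᵥ r) i₀ := smul_pow_le_pow_mulVec hD hc h k i₀
      _ ≤ ‖D ^ k *ᵥ r‖ := (Real.le_norm_self _).trans (norm_le_pi_norm _ i₀)
      _ ≤ ‖D ^ k‖ * ‖r‖ := linfty_opNorm_mulVec _ _
  have hroot : Tendsto (fun k : ℕ => ENNReal.ofReal (c * t ^ (1 / k : ℝ))) atTop
      (𝓝 (ENNReal.ofReal c)) := by
    refine ENNReal.tendsto_ofReal ?_
    simpa using tendsto_const_nhds.mul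
      ((Real.continuousAt_const_rpow ht.ne').tendsto.comp tendsto_one_div_atTop_nhds_zero_nat)
  refine le_of_tendsto_of_tendsto hroot
    (spectrum.pow_norm_pow_one_div_tendsto_nhds_spectralRadius _) ?_
  filter_upwards [eventually_ge_atTop 1] with k hk
  refine ENNReal.ofReal_le_ofReal ?_
  have hk₀ : k ≠ 0 := by omega
  have hmap : D.map (↑) ^ k = (D ^ k).map ((↑) : ℝ → ℂ) :=
    (map_pow Complex.ofRealHom.mapMatrix D k).symm
  rw [hmap, linfty_opNorm_map_ofReal, ← Real.pow_rpow_inv_natCast hc hk₀, one_div,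
    ← Real.mul_rpow (by positivity) ht.le]
  exact Real.rpow_le_rpow (by positivity) (hpow k) (by positivity)

end Gelfand

end Matrix

section SpectralRadius

variable {m : Type*} [Fintype m] [DecidableEq m]

theorem specRad_nonneg_s14 (D : Matrix m m ℝ) : 0 ≤ specRad D :=
  Real.sSup_nonneg (by rintro _ ⟨μ, _, rfl⟩; exact norm_nonneg μ)

theorem norm_le_specRad {D : Matrix m m ℝ} {μ : ℂ}
    (hμ : μ ∈ spectrum ℂ (D.map ((↑) : ℝ → ℂ))) : ‖μ‖ ≤ specRad D :=
  le_csSup ((finite_spectrum _).image _).bddAbove ⟨μ, hμ, rfl⟩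

theorem specRad_lt_of_forall_norm_lt {D : Matrix m m ℝ} {β : ℝ} (hβ : 0 < β)
    (h : ∀ μ ∈ spectrum ℂ (D.map ((↑) : ℝ → ℂ)), ‖μ‖ < β) : specRad D < β := by
  rcases ((fun z : ℂ => ‖z‖) '' spectrum ℂ (D.map ((↑) : ℝ → ℂ))).eq_empty_or_nonempty
    with he | hne
  · rwa [specRad, he, Real.sSup_empty]
  · obtain ⟨μ, hμ, hμD⟩ := hne.csSup_mem ((finite_spectrum _).image _)
    rw [specRad, ← hμD]
    exact h μ hμ

theorem spectralRadius_le_ofReal_specRad (D : Matrix m m ℝ) :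
    spectralRadius ℂ (D.map ((↑) : ℝ → ℂ)) ≤ ENNReal.ofReal (specRad D) :=
  iSup₂_le fun μ hμ => by
    rw [← enorm_eq_nnnorm, ← ofReal_norm]
    exact ENNReal.ofReal_le_ofReal (norm_le_specRad hμ)

theorem le_specRad_of_smul_le_mulVec {D : Matrix m m ℝ} (hD : ∀ i j, 0 ≤ D i j) {r : m → ℝ}
    {i₀ : m} (hi₀ : 0 < r i₀) {c : ℝ} (hc : 0 ≤ c) (h : c • r ≤ D *ᵥ r) : c ≤ specRad D :=
  (ENNReal.ofReal_le_ofReal_iff (specRad_nonneg_s14 D)).mp <|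
    (ofReal_le_spectralRadius_of_smul_le_mulVec hD hi₀ hc h).trans
      (spectralRadius_le_ofReal_specRad D)

theorem IsMMat.eq_zero_of_mulVec_nonpos {Q : Matrix m m ℝ} (hQ : IsMMat Q) {r : m → ℝ}
    (hr : 0 ≤ r) (hQr : Q *ᵥ r ≤ 0) : r = 0 := by
  obtain ⟨α, hD, hα⟩ := hQ
  by_contra hr₀
  obtain ⟨i₀, hi₀⟩ := Function.ne_iff.mp hr₀
  have hα₀ : 0 ≤ α := (specRad_nonneg_s14 _).trans hα.le
  have hDr : α • r ≤ (α • 1 - Q) *ᵥ r := by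
    rw [sub_mulVec, smul_mulVec, one_mulVec]
    exact (le_sub_self_iff _).mpr hQr
  exact hα.not_ge (le_specRad_of_smul_le_mulVec hD ((hr i₀).lt_of_ne' hi₀) hα₀ hDr)

theorem IsMMat.norm_lt_of_mem_spectrum {Q : Matrix m m ℝ} (hQ : IsMMat Q) {β : ℝ}
    {H : Matrix m m ℂ} (hH : ∀ i j, ‖H i j‖ ≤ (β • 1 - Q) i j) {μ : ℂ}
    (hμ : μ ∈ spectrum ℂ H) : ‖μ‖ < β := by
  obtain ⟨v, hv, hHv⟩ := exists_mulVec_eq_smul_of_mem_spectrum hμ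
  by_contra! hβμ
  set r : m → ℝ := fun i => ‖v i‖
  have hμr : ‖μ‖ • r ≤ (β • 1 - Q) *ᵥ r := fun i =>
    calc ‖μ‖ * ‖v i‖ = ‖(H *ᵥ v) i‖ := by rw [hHv, Pi.smul_apply, smul_eq_mul, norm_mul]
      _ ≤ ∑ j, ‖H i j‖ * ‖v j‖ := (norm_sum_le _ _).trans_eq (by simp only [norm_mul])
      _ ≤ ((β • 1 - Q) *ᵥ r) i :=
        Finset.sum_le_sum fun j _ => mul_le_mul_of_nonneg_right (hH i j) (norm_nonneg _)
  have hQr : Q *ᵥ r ≤ 0 := fun i => by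
    have hi := hμr i
    simp only [sub_mulVec, smul_mulVec, one_mulVec, Pi.sub_apply, Pi.smul_apply,
      smul_eq_mul] at hi
    have := mul_le_mul_of_nonneg_right hβμ (norm_nonneg (v i))
    show (Q *ᵥ r) i ≤ 0
    linarith
  have hr : r = 0 := hQ.eq_zero_of_mulVec_nonpos (fun i => norm_nonneg (v i)) hQr
  exact hv (funext fun i => norm_eq_zero.mp (congrFun hr i))

theorem IsMMat.specRad_fromBlocks_sub_lt {Q : Matrix m m ℝ} (hQ : IsMMat Q) {β : ℝ} (hβ : 0 < β)
    {R S : Matrix m m ℝ} (hR : ∀ i j, 0 ≤ R i j) (hS : ∀ i j, 0 ≤ S i j)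
    (hQR : ∀ i j, 0 ≤ (β • 1 - Q - R) i j) (hQS : ∀ i j, 0 ≤ (β • 1 - Q - S) i j) :
    specRad (fromBlocks (β • 1 - Q - R) R S (β • 1 - Q - S)) < β := by
  refine specRad_lt_of_forall_norm_lt hβ fun μ hμ => ?_
  have hsub (X Y : Matrix m m ℝ) : (X - Y).map ((↑) : ℝ → ℂ) = X.map (↑) - Y.map (↑) :=
    Matrix.map_sub _ Complex.ofReal_sub X Y
  generalize hB : β • 1 - Q = B at hQR hQS hμ
  rw [fromBlocks_map, hsub B R, hsub B S, spectrum_fromBlocks_sub_sub, ← hsub B R,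
    ← hsub (B - R) S] at hμ
  rcases hμ with hμ | hμ <;> refine hQ.norm_lt_of_mem_spectrum (fun i j => ?_) hμ <;>
    rw [hB] <;> specialize hQR i j <;> specialize hQS i j <;>
    simp only [map_apply, Matrix.sub_apply, Complex.norm_real, Real.norm_eq_abs] at hQR hQS ⊢
  · rw [abs_of_nonneg (by linarith [hR i j])]
  · rw [abs_le]
    constructor <;> linarith [hR i j, hS i j]

theorem IsMMat.fromBlocks_add_neg_neg_add {Q R S : Matrix m m ℝ} (hQ : IsMMat Q)
    (hR : ∀ i j, 0 ≤ R i j) (hS : ∀ i j, 0 ≤ S i j) (hQR : ∀ i j, i ≠ j → (Q + R) i j ≤ 0)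
    (hQS : ∀ i j, i ≠ j → (Q + S) i j ≤ 0) : IsMMat (fromBlocks (Q + R) (-R) (-S) (Q + S)) := by
  obtain ⟨b, hb⟩ := Finite.bddAbove_range fun i => max ((Q + R) i i) ((Q + S) i i)
  set β := max b 1
  have hQRβ : ∀ i j, 0 ≤ (β • 1 - Q - R) i j := by
    rw [sub_sub]
    exact smul_one_sub_nonneg hQR fun i =>
      (le_max_left _ _).trans ((hb ⟨i, rfl⟩).trans (le_max_left _ _))
  have hQSβ : ∀ i j, 0 ≤ (β • 1 - Q - S) i j := by
    rw [sub_sub]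
    exact smul_one_sub_nonneg hQS fun i =>
      (le_max_right _ _).trans ((hb ⟨i, rfl⟩).trans (le_max_left _ _))
  have hP : β • 1 - fromBlocks (Q + R) (-R) (-S) (Q + S) =
      fromBlocks (β • 1 - Q - R) R S (β • 1 - Q - S) := by
    rw [← fromBlocks_one, fromBlocks_smul, sub_eq_add_neg, fromBlocks_neg, fromBlocks_add]
    simp only [smul_zero, neg_neg, zero_add, ← sub_eq_add_neg, sub_sub]
  refine ⟨β, ?_, hP ▸ hQ.specRad_fromBlocks_sub_lt (by positivity) hR hS hQRβ hQSβ⟩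
  rw [hP]
  rintro (i | i) (j | j)
  exacts [hQRβ i j, hR i j, hS i j, hQSβ i j]

end SpectralRadius

theorem compMat_fromBlocks {m n : Type*} [DecidableEq m] [DecidableEq n] (W : Matrix m m ℂ)
    (X : Matrix m n ℂ) (Y : Matrix n m ℂ) (Z : Matrix n n ℂ) :
    compMat (fromBlocks W X Y Z) = fromBlocks (compMat W) (-cabs X) (-cabs Y) (compMat Z) := by
  ext (i | i) (j | j) <;> simp [compMat, cabs]

theorem compMat_apply_nonpos {m : Type*} [DecidableEq m] (A : Matrix m m ℂ) {i j : m}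
    (hij : i ≠ j) : compMat A i j ≤ 0 := by
  simp [compMat, hij]

theorem cabs_nonneg {m l : Type*} (A : Matrix m l ℂ) (i : m) (j : l) : 0 ≤ cabs A i j :=
  norm_nonneg (A i j)

theorem cabs_sub_comm {m l : Type*} (A B : Matrix m l ℂ) : cabs (A - B) = cabs (B - A) := by
  ext i j
  exact norm_sub_rev (A i j) (B i j)

theorem stmt14 {n : ℕ} (A M F : Matrix (Fin n) (Fin n) ℂ)
    (hA : IsHMat A)
    (hM : compMat M - cabs (M - A) = compMat A)
    (hF : compMat F - cabs (F - A) = compMat A) :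
    IsHMat (Matrix.fromBlocks M (A - M) (A - F) F) := by
  rw [sub_eq_iff_eq_add] at hM hF
  rw [IsHMat, compMat_fromBlocks, cabs_sub_comm A M, cabs_sub_comm A F, hM, hF]
  exact hA.fromBlocks_add_neg_neg_add (cabs_nonneg _) (cabs_nonneg _)
    (fun i j hij => hM ▸ compMat_apply_nonpos M hij)
    (fun i j hij => hF ▸ compMat_apply_nonpos F hij)
end
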